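/- arXiv:2201.06148 — 5 statements merged into one kernel-verified Lean document; each statement's English description precedes it below -/
import Mathlib

section
/- Let A be an associative unital algebra over the field k = ℚ(u, ω) (or any field in which 1-u, u+ω/2-1, and their counterparts at -u are invertible), and let P, K ∈ A satisfy P² = 1, K² = ω·K, PK = KP = K. Define R(u) = (1/(1-u))·(u·1 + P - (u/(u+ω/2-1))·K). Then R(u) is unitary in the sense that P·R(u)·P·R(-u) = 1. -/
/-! Since `P` commutes with `1`, `P` and `K`, conjugation by `P` fixes `R(u)`, so unitarity reduces to
`R(u) R(-u) = 1`. In the span of `1, P, K` the Brauer relations give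
`(a + P - cK)(a' + P - c'K) = (aa' + 1) + (a + a')P - (ac' + ca' + c + c' - ω cc')K`;
for `a' = -a = -u` the `P`-term vanishes, and for the two values of `c` in `R(±u)` so does the
`K`-term, leaving `(1 - u²) = (1 - u)(1 + u)`. -/

section Brauer

variable {F A : Type*} [CommRing F] [Ring A] [Algebra F A] {P K : A}

theorem brauer_conj (hPP : P * P = 1) (hPK : P * K = K) (hKP : K * P = K) (a c : F) :
    P * (a • (1 : A) + P - c • K) * P = a • (1 : A) + P - c • K := by
  simp only [mul_add, add_mul, mul_sub, sub_mul, smul_mul_assoc, mul_smul_comm, mul_one, one_mul,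
    hPP, hPK, hKP]

theorem brauer_mul {ω : F} (hPP : P * P = 1) (hKK : K * K = ω • K) (hPK : P * K = K)
    (hKP : K * P = K) (a c a' c' : F) :
    (a • (1 : A) + P - c • K) * (a' • (1 : A) + P - c' • K) =
      (a * a' + 1) • (1 : A) + (a + a') • P - (a * c' + c * a' + c + c' - ω * c * c') • K := by
  simp only [mul_add, add_mul, mul_sub, sub_mul, smul_mul_assoc, mul_smul_comm, mul_one, one_mul,
    hPP, hKK, hPK, hKP, smul_smul]
  match_scalars <;> ring

end Brauer

theorem osp_K_coeff_eq_zero {F : Type*} [Field F] [CharZero F] {ω u : F}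
    (h₂ : u + ω / 2 - 1 ≠ 0) (h₄ : -u + ω / 2 - 1 ≠ 0) :
    u * ((-u) / (-u + ω / 2 - 1)) + u / (u + ω / 2 - 1) * (-u) + u / (u + ω / 2 - 1)
      + (-u) / (-u + ω / 2 - 1) - ω * (u / (u + ω / 2 - 1)) * ((-u) / (-u + ω / 2 - 1)) = 0 := by
  obtain ⟨c, rfl⟩ : ∃ c : F, ω = 2 * c + 2 := ⟨ω / 2 - 1, by ring⟩
  have e₂ : u + (2 * c + 2) / 2 - 1 = u + c := by ring
  have e₄ : -u + (2 * c + 2) / 2 - 1 = c - u := by ring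
  rw [e₂] at h₂
  rw [e₄] at h₄
  rw [e₂, e₄]
  field_simp
  ring

/-- Unitarity `P·R(u)·P·R(-u) = 1` of the `osp(M|N)`-invariant rational Yang–Baxter solution
in the defining representation, using only the Brauer-type relations among `P` and `K`. -/
theorem osp_R_matrix_unitarity {F A : Type*} [Field F] [CharZero F]
    [Ring A] [Algebra F A] (ω u : F)
    (h₁ : (1 : F) - u ≠ 0) (h₂ : u + ω / 2 - 1 ≠ 0)
    (h₃ : (1 : F) + u ≠ 0) (h₄ : -u + ω / 2 - 1 ≠ 0)
    (P K R R' : A)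
    (hP : P ^ 2 = 1) (hK : K ^ 2 = ω • K) (hPK : P * K = K) (hKP : K * P = K)
    (hR : R = (1 / (1 - u)) • (u • (1 : A) + P - (u / (u + ω / 2 - 1)) • K))
    (hR' : R' = (1 / (1 + u)) • ((-u) • (1 : A) + P - ((-u) / (-u + ω / 2 - 1)) • K)) :
    P * R * P * R' = 1 := by
  rw [sq] at hP hK
  have hconj : P * R * P = R := by
    rw [hR, mul_smul_comm, smul_mul_assoc, brauer_conj hP hPK hKP]
  have hscalar : 1 / (1 - u) * (1 / (1 + u)) * (u * -u + 1) = (1 : F) := by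
    field_simp
    ring
  rw [hconj, hR, hR', smul_mul_smul_comm, brauer_mul hP hK hPK hKP, osp_K_coeff_eq_zero h₂ h₄,
    add_neg_cancel, zero_smul, zero_smul, add_zero, sub_zero, smul_smul, hscalar,
    one_smul]
end

section
/- Let A be an associative unital algebra over a field k of characteristic 0, ω ∈ k with ω ≠ 0, 2, and P, K ∈ A with P² = 1, K² = ωK, PK = KP = K. Set C = (1/(2(ω-2)))(P - K) and R(u) = (1/(1-u))·(u + P - (u/(u+ω/2-1))·K) for u ∈ k such that all denominators are nonzero. Then R(u)·((ω-2)C + 1/2 - u) = (ω-2)C + 1/2 + u; i.e., R(u) is the rational function ((ω-2)C + 1/2 + u)/((ω-2)C + 1/2 - u) of the split Casimir operator C. -/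
/-!
The relations `P ^ 2 = 1`, `K ^ 2 = ω • K`, `P * K = K * P = K` make the span of `1, P, K` a
three-dimensional algebra with an explicit multiplication table. Both `R(u)` and
`(ω - 2) • C + (1/2 ∓ u) • 1` lie in this span, so the claim reduces to three scalar identities
between the coefficients of `1`, `P` and `K`; clearing the denominators `1 - u` and
`u + ω/2 - 1` turns them into polynomial identities.
-/

theorem smul_one_add_smul_add_smul_mul {F A : Type*} [CommSemiring F] [Semiring A] [Algebra F A]
    {ω : F} {P K : A} (hP : P ^ 2 = 1) (hK : K ^ 2 = ω • K) (hPK : P * K = K) (hKP : K * P = K)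
    (a b c d e f : F) :
    (a • (1 : A) + b • P + c • K) * (d • (1 : A) + e • P + f • K) =
      (a * d + b * e) • (1 : A) + (a * e + b * d) • P +
        (a * f + b * f + c * d + c * e + ω * c * f) • K := by
  rw [pow_two] at hP hK
  simp only [add_mul, mul_add, smul_mul_smul_comm, hP, hK, hPK, hKP, one_mul, mul_one, smul_smul]
  match_scalars <;> ring

theorem osp_R_matrix_as_function_of_casimir_general {F A : Type*} [Field F] [CharZero F]
    [Ring A] [Algebra F A] (ω u : F) (hω2 : ω ≠ 2)
    (h₁ : (1 : F) - u ≠ 0) (h₂ : u + ω / 2 - 1 ≠ 0)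
    (P K C R : A)
    (hP : P ^ 2 = 1) (hK : K ^ 2 = ω • K) (hPK : P * K = K) (hKP : K * P = K)
    (hC : C = (1 / (2 * (ω - 2))) • (P - K))
    (hR : R = (1 / (1 - u)) • (u • (1 : A) + P - (u / (u + ω / 2 - 1)) • K)) :
    R * ((ω - 2) • C + (1 / 2 - u) • (1 : A)) = (ω - 2) • C + (1 / 2 + u) • (1 : A) := by
  have hω2' : ω - 2 ≠ 0 := sub_ne_zero.mpr hω2
  have hC_span (t : F) :
      (ω - 2) • C + t • (1 : A) = t • (1 : A) + (1 / 2 : F) • P + (-1 / 2 : F) • K := by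
    rw [hC, smul_smul]
    match_scalars <;> field_simp
  have hR_scaled : ((1 - u) * (u + ω / 2 - 1)) • R =
      ((u + ω / 2 - 1) * u) • (1 : A) + (u + ω / 2 - 1) • P + (-u) • K := by
    rw [hR, smul_smul, mul_right_comm, mul_one_div_cancel h₁, one_mul, smul_sub, smul_add,
      smul_smul, smul_smul, mul_div_cancel₀ _ h₂]
    module
  apply smul_right_injective A (mul_ne_zero h₁ h₂)
  dsimp only
  rw [← smul_mul_assoc, hR_scaled, hC_span, hC_span, smul_one_add_smul_add_smul_mul hP hK hPK hKP]
  match_scalars <;> ring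

/-- The `osp(M|N)`-invariant Yang–Baxter solution in the defining representation is the
rational function `((ω-2)C + 1/2 + u)/((ω-2)C + 1/2 - u)` of the split Casimir operator `C`. -/
theorem osp_R_matrix_as_function_of_casimir {F A : Type*} [Field F] [CharZero F]
    [Ring A] [Algebra F A] (ω u : F) (hω0 : ω ≠ 0) (hω2 : ω ≠ 2)
    (h₁ : (1 : F) - u ≠ 0) (h₂ : u + ω / 2 - 1 ≠ 0)
    (P K C R : A)
    (hP : P ^ 2 = 1) (hK : K ^ 2 = ω • K) (hPK : P * K = K) (hKP : K * P = K)
    (hC : C = (1 / (2 * (ω - 2))) • (P - K))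
    (hR : R = (1 / (1 - u)) • (u • (1 : A) + P - (u / (u + ω / 2 - 1)) • K)) :
    R * ((ω - 2) • C + (1 / 2 - u) • (1 : A)) = (ω - 2) • C + (1 / 2 + u) • (1 : A) :=
  osp_R_matrix_as_function_of_casimir_general ω u hω2 h₁ h₂ P K C R hP hK hPK hKP hC hR
end

section
/- Let A be an associative unital algebra over a field k of characteristic 0, let n, μ₁, μ₂ ∈ k with μ₂ ≠ 0, and let C, P, K ∈ A satisfy: C³ + (1/2)C² = μ₁·C + μ₂·(1 + P - 2K), K·(1+P) = 2K, K·C = C·K = -K, and K² = n·K, with K ≠ 0. Then n = (2μ₂ - μ₁ + 1/2)/(2μ₂). -/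
/-!
Multiplying the cubic identity on the left by `K` collapses every term onto `K`: the relation
`K C = -K` turns `K C^m` into `(-1)^m K`, `K (1 + P) = 2K` gives `K P = K`, and `K² = nK`.
What remains is `(2μ₂ n - 2μ₂ + μ₁ - 1/2) K = 0`, and since `K` has no scalar annihilator the
coefficient vanishes.
-/

theorem mul_pow_eq_neg_one_pow_smul {A : Type*} [Ring A] {K C : A} (hKC : K * C = -K) (m : ℕ) :
    K * C ^ m = (-1) ^ m • K := by
  induction m with
  | zero => simp
  | succ m ih =>
    rw [pow_succ, ← mul_assoc, ih, smul_mul_assoc, hKC, pow_succ, mul_smul, neg_one_smul]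

theorem mul_eq_self_of_mul_one_add_eq_two_smul {F A : Type*} [Field F] [Ring A] [Algebra F A]
    {K P : A} (hKP : K * (1 + P) = (2 : F) • K) : K * P = K := by
  rw [mul_add, mul_one, two_smul] at hKP
  exact add_left_cancel hKP

theorem smul_eq_zero_of_universal_cubic {F A : Type*} [Field F] [Ring A] [Algebra F A]
    {n μ₁ μ₂ : F} {C P K : A}
    (hcube : C ^ 3 + (1 / 2 : F) • C ^ 2 = μ₁ • C + μ₂ • (1 + P - (2 : F) • K))
    (hKP : K * (1 + P) = (2 : F) • K) (hKC : K * C = -K) (hK2 : K ^ 2 = n • K) :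
    (2 * μ₂ * n - 2 * μ₂ + μ₁ + 1 / 2 - 1) • K = 0 := by
  have h := congrArg (K * ·) hcube
  simp only [mul_add, mul_sub, mul_smul_comm, mul_one] at h
  rw [mul_pow_eq_neg_one_pow_smul hKC, mul_pow_eq_neg_one_pow_smul hKC, hKC,
    mul_eq_self_of_mul_one_add_eq_two_smul hKP, ← pow_two, hK2] at h
  linear_combination (norm := module) h

theorem superdimension_from_universal_cubic_general {F A : Type*} [Field F] [CharZero F]
    [Ring A] [Algebra F A] (n μ₁ μ₂ : F) (hμ₂ : μ₂ ≠ 0)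
    (C P K : A)
    (hcube : C ^ 3 + (1 / 2 : F) • C ^ 2 = μ₁ • C + μ₂ • (1 + P - (2 : F) • K))
    (hKP : K * (1 + P) = (2 : F) • K)
    (hKC : K * C = -K)
    (hK2 : K ^ 2 = n • K)
    (hfaith : ∀ c : F, c • K = 0 → c = 0) :
    n = (2 * μ₂ - μ₁ + 1 / 2) / (2 * μ₂) := by
  have hcoeff := hfaith _ (smul_eq_zero_of_universal_cubic hcube hKP hKC hK2)
  rw [eq_div_iff (mul_ne_zero two_ne_zero hμ₂)]
  linear_combination hcoeff

/-- From the universal cubic identity for the symmetric part `C = Ĉ₊` of the split Casimir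
operator together with the relations involving `P` and `K` (with `K² = n·K`), the
superdimension `n` is recovered as `(2μ₂ - μ₁ + 1/2)/(2μ₂)`. -/
theorem superdimension_from_universal_cubic {F A : Type*} [Field F] [CharZero F]
    [Ring A] [Algebra F A] (n μ₁ μ₂ : F) (hμ₂ : μ₂ ≠ 0)
    (C P K : A)
    (hcube : C ^ 3 + (1 / 2 : F) • C ^ 2 = μ₁ • C + μ₂ • (1 + P - (2 : F) • K))
    (hKP : K * (1 + P) = (2 : F) • K)
    (hKC : K * C = -K) (hCK : C * K = -K)
    (hK2 : K ^ 2 = n • K)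
    (hKne : K ≠ 0)
    (hfaith : ∀ c : F, c • K = 0 → c = 0) :
    n = (2 * μ₂ - μ₁ + 1 / 2) / (2 * μ₂) :=
  superdimension_from_universal_cubic_general n μ₁ μ₂ hμ₂ C P K hcube hKP hKC hK2 hfaith
end

section
/- Let A be an associative unital algebra over a field of characteristic 0, let μ₁, μ₂ be scalars, and let C, P, K ∈ A satisfy: C³ + (1/2)C² = μ₁C + μ₂(1 + P - 2K), P·C = C·P = C, K·C = C·K = -K, and K·(1+P) = 2K. Then C·(C + 1)·(C³ + (1/2)C² - μ₁C - 2μ₂·1) = 0. -/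
/-!
The cubic identity says that the cubic factor of the quintic equals `μ₂ (P - 1 - 2K)`.
Since `C K = -K`, left multiplication by `C + 1` kills `K` and turns `P - 1 - 2K` into `P - 1`,
which is annihilated by `C` because `C P = C`.
-/

section

variable {A : Type*} [Ring A] {C P K : A}

theorem add_one_mul_sub_one_sub_two_mul (hCP : C * P = C) (hCK : C * K = -K) :
    (C + 1) * (P - 1 - 2 * K) = P - 1 := by
  rw [two_mul, add_mul, one_mul, mul_sub, mul_sub, mul_add, hCP, hCK, mul_one]
  abel

theorem mul_add_one_mul_sub_one_sub_two_mul (hCP : C * P = C) (hCK : C * K = -K) :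
    C * (C + 1) * (P - 1 - 2 * K) = 0 := by
  rw [mul_assoc, add_one_mul_sub_one_sub_two_mul hCP hCK, mul_sub, hCP, mul_one, sub_self]

end

theorem universal_quintic_identity_general {F A : Type*} [Field F]
    [Ring A] [Algebra F A] (μ₁ μ₂ : F) (C P K : A)
    (hcube : C ^ 3 + (1 / 2 : F) • C ^ 2 = μ₁ • C + μ₂ • (1 + P - (2 : F) • K))
    (hCP : C * P = C)
    (hCK : C * K = -K) :
    C * (C + 1) * (C ^ 3 + (1 / 2 : F) • C ^ 2 - μ₁ • C - (2 * μ₂) • (1 : A)) = 0 := by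
  have hcubic_factor : C ^ 3 + (1 / 2 : F) • C ^ 2 - μ₁ • C - (2 * μ₂) • (1 : A)
      = μ₂ • (P - 1 - 2 * K) := by
    rw [hcube, two_mul K]
    module
  rw [hcubic_factor, mul_smul_comm, mul_add_one_mul_sub_one_sub_two_mul hCP hCK, smul_zero]

/-- The universal quintic characteristic identity for the symmetric part `C = Ĉ₊` of the
split Casimir operator in the adjoint tensor square follows from the universal cubic identity
and the relations with `P` and `K`. -/
theorem universal_quintic_identity {F A : Type*} [Field F] [CharZero F]
    [Ring A] [Algebra F A] (μ₁ μ₂ : F) (C P K : A)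
    (hcube : C ^ 3 + (1 / 2 : F) • C ^ 2 = μ₁ • C + μ₂ • (1 + P - (2 : F) • K))
    (hPC : P * C = C) (hCP : C * P = C)
    (hKC : K * C = -K) (hCK : C * K = -K)
    (hKP : K * (1 + P) = (2 : F) • K) :
    C * (C + 1) * (C ^ 3 + (1 / 2 : F) • C ^ 2 - μ₁ • C - (2 * μ₂) • (1 : A)) = 0 :=
  universal_quintic_identity_general μ₁ μ₂ C P K hcube hCP hCK
end

section
/- Let A be an associative unital algebra over a field of characteristic 0, and let P₋, Ĉ₋, C̃₋ ∈ A satisfy: P₋² = P₋; P₋Ĉ₋ = Ĉ₋P₋ = Ĉ₋; P₋C̃₋ = C̃₋P₋ = C̃₋; Ĉ₋² = -(1/2)Ĉ₋; C̃₋Ĉ₋ = Ĉ₋C̃₋ = 0; and C̃₋² = 2Ĉ₋ + P₋. Then C̃₋·(C̃₋ + P₋)·(C̃₋ - P₋) = 0, and the three elements Q₀ = -2Ĉ₋, Q₋₁ = Ĉ₋ + (1/2)P₋ - (1/2)C̃₋, Q₁ = Ĉ₋ + (1/2)P₋ + (1/2)C̃₋ are pairwise orthogonal idempotents with Q₀ +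 Q₋₁ + Q₁ = P₋. -/
/-!
Put `E := -2 Ĉ₋` and `R := P₋ - E = P₋ + 2 Ĉ₋`. The relations say exactly that `E` and `R` are
orthogonal idempotents with sum `P₋`, that `C̃₋` lies in the corner ring `R A R` and kills `E`,
and that `C̃₋² = R`, i.e. `C̃₋` is an involution of that corner ring. An involution `T` of a
corner ring with unit `R` splits `R` into the eigenprojections `(R ± T)/2`, which gives
`Q₀ = E`, `Q₋₁ = (R - T)/2` and `Q₁ = (R + T)/2`; on `P₋ = R + E` the element `T` then has
eigenvalues `0, -1, 1`, whence the cubic identity.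
-/

section CornerInvolution

variable {A : Type*} [Ring A]

/-- `T` is an involution of the corner ring `R A R`, whose unit is the idempotent `R`. -/
structure IsCornerInvolution (R T : A) : Prop where
  idem : IsIdempotentElem R
  mul_left : R * T = T
  mul_right : T * R = T
  mul_self : T * T = R

namespace IsCornerInvolution

variable {R T E : A}

theorem neg (h : IsCornerInvolution R T) : IsCornerInvolution R (-T) where
  idem := h.idem
  mul_left := by rw [mul_neg, h.mul_left]
  mul_right := by rw [neg_mul, h.mul_right]
  mul_self := by rw [neg_mul_neg, h.mul_self]

theorem add_mul_sub_eq_zero (h : IsCornerInvolution R T) : (R + T) * (R - T) = 0 := by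
  rw [add_mul, mul_sub, mul_sub, h.idem.eq, h.mul_left, h.mul_right, h.mul_self]
  abel

theorem sub_mul_add_eq_zero (h : IsCornerInvolution R T) : (R - T) * (R + T) = 0 := by
  simpa only [sub_neg_eq_add, ← sub_eq_add_neg] using h.neg.add_mul_sub_eq_zero

theorem mul_add_eq_zero (h : IsCornerInvolution R T) (hER : E * R = 0) :
    E * (R + T) = 0 := by
  rw [mul_add, ← h.mul_left, ← mul_assoc, hER, zero_mul, add_zero]

theorem add_mul_eq_zero (h : IsCornerInvolution R T) (hRE : R * E = 0) :
    (R + T) * E = 0 := by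
  rw [add_mul, ← h.mul_right, mul_assoc, hRE, mul_zero, add_zero]

theorem mul_add_mul_sub_eq_zero (h : IsCornerInvolution R T) (hRE : R * E = 0) :
    T * (T + (R + E)) * (T - (R + E)) = 0 := by
  have hTE : T * E = 0 := by rw [← h.mul_right, mul_assoc, hRE, mul_zero]
  have hleft : T * (T + (R + E)) = R + T := by
    rw [mul_add, mul_add, h.mul_self, h.mul_right, hTE, add_zero, add_comm]
  rw [hleft, mul_sub, mul_add, h.add_mul_eq_zero hRE, add_zero, add_mul, add_mul, h.mul_left,
    h.mul_self, h.idem.eq, h.mul_right]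
  abel

variable {F : Type*} [Field F] [Algebra F A]

theorem isIdempotentElem_half_smul_add (h : IsCornerInvolution R T) (h2 : (2 : F) ≠ 0) :
    IsIdempotentElem ((1 / 2 : F) • (R + T)) := by
  have hsq : (R + T) * (R + T) = (2 : F) • (R + T) := by
    rw [add_mul, mul_add, mul_add, h.idem.eq, h.mul_left, h.mul_right, h.mul_self]
    module
  rw [IsIdempotentElem, smul_mul_smul_comm, hsq, smul_smul]
  congr 1
  field_simp

theorem isIdempotentElem_half_smul_sub (h : IsCornerInvolution R T) (h2 : (2 : F) ≠ 0) :
    IsIdempotentElem ((1 / 2 : F) • (R - T)) := by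
  simpa only [← sub_eq_add_neg] using h.neg.isIdempotentElem_half_smul_add h2

theorem orthogonalIdempotents (h : IsCornerInvolution R T) (h2 : (2 : F) ≠ 0)
    (hE : IsIdempotentElem E) (hER : E * R = 0) (hRE : R * E = 0) :
    OrthogonalIdempotents ![E, (1 / 2 : F) • (R - T), (1 / 2 : F) • (R + T)] := by
  have hEp := h.mul_add_eq_zero hER
  have hpE := h.add_mul_eq_zero hRE
  have hEm : E * (R - T) = 0 := by
    simpa only [← sub_eq_add_neg] using h.neg.mul_add_eq_zero hER
  have hmE : (R - T) * E = 0 := by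
    simpa only [← sub_eq_add_neg] using h.neg.add_mul_eq_zero hRE
  refine ⟨fun i ↦ ?_, fun i j hij ↦ ?_⟩
  · fin_cases i
    exacts [hE, h.isIdempotentElem_half_smul_sub h2, h.isIdempotentElem_half_smul_add h2]
  · fin_cases i <;> fin_cases j <;>
      simp only [Fin.reduceFinMk, Matrix.cons_val, mul_smul_comm,
        smul_mul_assoc, hEp, hpE, hEm, hmE, h.add_mul_sub_eq_zero, h.sub_mul_add_eq_zero,
        smul_zero] at hij ⊢ <;> exact absurd rfl hij

end IsCornerInvolution

end CornerInvolution

/-- For `sl(M|N)`: the additional invariant operator `C̃₋` satisfies a cubic characteristic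
identity on the antisymmetric part, and the resulting three operators are pairwise orthogonal
idempotents summing to the antisymmetrizer `P₋`. -/
theorem sl_antisymmetric_fine_projectors {F A : Type*} [Field F] [CharZero F]
    [Ring A] [Algebra F A] (Pm Cm Ct : A)
    (hPm : Pm * Pm = Pm)
    (hPmCm : Pm * Cm = Cm) (hCmPm : Cm * Pm = Cm)
    (hPmCt : Pm * Ct = Ct) (hCtPm : Ct * Pm = Ct)
    (hCm2 : Cm ^ 2 = (-(1 / 2) : F) • Cm)
    (hCtCm : Ct * Cm = 0) (hCmCt : Cm * Ct = 0)
    (hCt2 : Ct ^ 2 = (2 : F) • Cm + Pm)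
    (Q₀ Qm Qp : A)
    (hQ₀ : Q₀ = (-2 : F) • Cm)
    (hQm : Qm = Cm + (1 / 2 : F) • Pm - (1 / 2 : F) • Ct)
    (hQp : Qp = Cm + (1 / 2 : F) • Pm + (1 / 2 : F) • Ct) :
    Ct * (Ct + Pm) * (Ct - Pm) = 0 ∧
    Q₀ * Q₀ = Q₀ ∧ Qm * Qm = Qm ∧ Qp * Qp = Qp ∧
    Q₀ * Qm = 0 ∧ Qm * Q₀ = 0 ∧ Q₀ * Qp = 0 ∧ Qp * Q₀ = 0 ∧
    Qm * Qp = 0 ∧ Qp * Qm = 0 ∧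
    Q₀ + Qm + Qp = Pm := by
  set E := (-2 : F) • Cm
  set R := Pm - E
  have hE : IsIdempotentElem E := by
    rw [IsIdempotentElem, smul_mul_smul_comm, ← pow_two Cm, hCm2, smul_smul]
    congr 1
    norm_num
  have hEP : E * Pm = E := by rw [smul_mul_assoc, hCmPm]
  have hPE : Pm * E = E := by rw [mul_smul_comm, hPmCm]
  have hER : E * R = 0 := by rw [mul_sub, hEP, hE.eq, sub_self]
  have hRE : R * E = 0 := by rw [sub_mul, hPE, hE.eq, sub_self]
  have hT : IsCornerInvolution R Ct :=
    ⟨hE.sub hPm hEP hPE,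
      by rw [sub_mul, hPmCt, smul_mul_assoc, hCmCt, smul_zero, sub_zero],
      by rw [mul_sub, hCtPm, mul_smul_comm, hCtCm, smul_zero, sub_zero],
      by rw [← pow_two, hCt2]; module⟩
  have hRE_sum : R + E = Pm := sub_add_cancel Pm E
  obtain ⟨idem, ortho⟩ := hT.orthogonalIdempotents (two_ne_zero (α := F)) hE hER hRE
  have hQm' : Qm = (1 / 2 : F) • (R - Ct) := by rw [hQm]; module
  have hQp' : Qp = (1 / 2 : F) • (R + Ct) := by rw [hQp]; module
  subst hQ₀ hQm' hQp'
  refine ⟨by simpa only [hRE_sum] using hT.mul_add_mul_sub_eq_zero hRE,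
    idem 0, idem 1, idem 2, ortho (i := 0) (j := 1) (by decide),
    ortho (i := 1) (j := 0) (by decide), ortho (i := 0) (j := 2) (by decide),
    ortho (i := 2) (j := 0) (by decide), ortho (i := 1) (j := 2) (by decide),
    ortho (i := 2) (j := 1) (by decide), by module⟩
end
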